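/- arXiv:1303.1927 — 5 statements merged into one kernel-verified Lean document; each statement's English description precedes it below -/
import Mathlib

section
/- Let X, Y, Z be random vectors such that the conditional distribution of X given Z = z is smaller in the linear stochastic order than the conditional distribution of Y given Z = z for every z in the support of Z. Then X ⪯_l-st Y (the linear stochastic order is closed under mixtures). -/
open MeasureTheory ProbabilityTheory
noncomputable section

/-- `X ⪯_l-st Y`: for every nonnegative vector `s`, `P(sᵀX > t) ≤ P(sᵀY > t)` for all `t`. -/
def LinStOrd {ι : Type*} [Fintype ι] (μ ν : Measure (ι → ℝ)) : Prop :=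
  ∀ s : ι → ℝ, (∀ i, 0 ≤ s i) → ∀ t : ℝ,
    μ {x | t < ∑ i, s i * x i} ≤ ν {x | t < ∑ i, s i * x i}

lemma measurableSet_lt_weightedSum {ι : Type*} [Fintype ι] (s : ι → ℝ) (t : ℝ) :
    MeasurableSet {x : ι → ℝ | t < ∑ i, s i * x i} :=
  measurableSet_lt measurable_const (by fun_prop)

lemma Measure.bind_apply_mono_ae {α β : Type*} [MeasurableSpace α] [MeasurableSpace β]
    {ρ : Measure α} {f g : α → Measure β} (hf : AEMeasurable f ρ) (hg : AEMeasurable g ρ)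
    {A : Set β} (hA : MeasurableSet A) (hfg : ∀ᵐ z ∂ρ, f z A ≤ g z A) :
    ρ.bind f A ≤ ρ.bind g A := by
  rw [Measure.bind_apply hA hf, Measure.bind_apply hA hg]
  exact lintegral_mono_ae hfg

theorem linStOrd_mixture_general {α : Type*} [MeasurableSpace α] {ι : Type*} [Fintype ι]
    (ρ : Measure α)
    (κX κY : Kernel α (ι → ℝ))
    (h : ∀ᵐ z ∂ρ, LinStOrd (κX z) (κY z)) :
    LinStOrd (ρ.bind (fun z => κX z)) (ρ.bind (fun z => κY z)) := fun s hs t =>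
  Measure.bind_apply_mono_ae κX.measurable.aemeasurable κY.measurable.aemeasurable
    (measurableSet_lt_weightedSum s t) (h.mono fun _ hz => hz s hs t)

/-- Closure of the linear stochastic order under mixtures: if the conditional distribution of `X`
given `Z = z` is smaller (in the linear stochastic order) than that of `Y` given `Z = z` for
(almost) every `z` in the support of `Z`, then the marginal distributions are ordered. -/
theorem linStOrd_mixture {α : Type*} [MeasurableSpace α] {ι : Type*} [Fintype ι]
    (ρ : Measure α) [IsProbabilityMeasure ρ]
    (κX κY : Kernel α (ι → ℝ)) [IsMarkovKernel κX] [IsMarkovKernel κY]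
    (h : ∀ᵐ z ∂ρ, LinStOrd (κX z) (κY z)) :
    LinStOrd (ρ.bind (fun z => κX z)) (ρ.bind (fun z => κY z)) :=
  linStOrd_mixture_general ρ κX κY h
end
end

section
/- Let X_1,...,X_n be independent random vectors of dimensions p_1,...,p_n, and Y_1,...,Y_n independent random vectors of the same dimensions, with X_i ⪯_l-st Y_i for each i. Then the concatenated vector (X_1,...,X_n) is smaller in the linear stochastic order than (Y_1,...,Y_n). -/
/-!
Each coordinate functional `sᵀx` with `s ≥ 0` of the concatenated vector is a sum of independent
terms `s⁽ⁱ⁾ᵀXᵢ`, and `s⁽ⁱ⁾ᵀXᵢ ⪯_st s⁽ⁱ⁾ᵀYᵢ` by hypothesis. Independent sums respect the usual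
stochastic order: by Fubini, conditioning on all other summands, the summands can be replaced by
their dominating counterparts one at a time.
-/

open MeasureTheory ProbabilityTheory
noncomputable section

universe u

/-- The law of `f` under `μ` is stochastically smaller than its law under `ν`. -/
def StochLE {α : Type*} [MeasurableSpace α] (f : α → ℝ) (μ ν : Measure α) : Prop :=
  ∀ t : ℝ, μ {x | t < f x} ≤ ν {x | t < f x}

theorem stochLE_map_iff {α β : Type*} [MeasurableSpace α] [MeasurableSpace β] {f : β → ℝ}
    {g : α → β} {μ ν : Measure α} (hf : Measurable f) (hg : Measurable g) :
    StochLE f (μ.map g) (ν.map g) ↔ StochLE (f ∘ g) μ ν := by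
  simp only [StochLE, Measure.map_apply hg (measurableSet_lt measurable_const hf)]
  rfl

namespace StochLE

theorem prod_add {α β : Type*} [MeasurableSpace α] [MeasurableSpace β]
    {μ₁ ν₁ : Measure α} {μ₂ ν₂ : Measure β} [SFinite μ₁] [SFinite ν₁] [SFinite μ₂] [SFinite ν₂]
    {f : α → ℝ} {g : β → ℝ} (hf : Measurable f) (hg : Measurable g)
    (h₁ : StochLE f μ₁ ν₁) (h₂ : StochLE g μ₂ ν₂) :
    StochLE (fun q : α × β => f q.1 + g q.2) (μ₁.prod μ₂) (ν₁.prod ν₂) := by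
  intro t
  have hB : MeasurableSet {q : α × β | t < f q.1 + g q.2} :=
    measurableSet_lt measurable_const (by fun_prop)
  calc (μ₁.prod μ₂) {q | t < f q.1 + g q.2}
      ≤ (ν₁.prod μ₂) {q | t < f q.1 + g q.2} := by
        rw [Measure.prod_apply_symm hB, Measure.prod_apply_symm hB]
        refine lintegral_mono fun b => ?_
        have hslice : (fun a => (a, b)) ⁻¹' {q | t < f q.1 + g q.2} = {a | t - g b < f a} := by
          ext a; simp [sub_lt_iff_lt_add]
        simpa only [hslice] using h₁ (t - g b)
    _ ≤ (ν₁.prod ν₂) {q | t < f q.1 + g q.2} := by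
        rw [Measure.prod_apply hB, Measure.prod_apply hB]
        refine lintegral_mono fun a => ?_
        have hslice : Prod.mk a ⁻¹' {q | t < f q.1 + g q.2} = {b | t - f a < g b} := by
          ext b; simp [sub_lt_iff_lt_add']
        simpa only [hslice] using h₂ (t - f a)

theorem pi_sum : ∀ {n : ℕ} {α : Fin n → Type u} [∀ i, MeasurableSpace (α i)]
    {μ ν : ∀ i, Measure (α i)} [∀ i, SigmaFinite (μ i)] [∀ i, SigmaFinite (ν i)]
    {f : ∀ i, α i → ℝ}, (∀ i, Measurable (f i)) → (∀ i, StochLE (f i) (μ i) (ν i)) →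
    StochLE (fun x => ∑ i, f i (x i)) (Measure.pi μ) (Measure.pi ν)
  | 0, _, _, _, _, _, _, _, _, _ => fun t => by
    rcases lt_or_ge t 0 with ht | ht <;> simp [ht, not_lt_of_ge]
  | n + 1, α, _, μ, ν, _, _, f, hf, h => by
    have hsplit : (fun x => ∑ i, f i (x i))
        = (fun q => f 0 q.1 + ∑ j, f (Fin.succAbove 0 j) (q.2 j)) ∘
          MeasurableEquiv.piFinSuccAbove α 0 := by
      ext x
      simp only [Function.comp_apply, MeasurableEquiv.piFinSuccAbove_apply,
        Fin.insertNthEquiv_symm_apply, Fin.removeNth]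
      exact Fin.sum_univ_succAbove _ 0
    rw [hsplit]
    refine (stochLE_map_iff (by fun_prop) (MeasurableEquiv.measurable _)).1 ?_
    rw [(measurePreserving_piFinSuccAbove μ 0).map_eq, (measurePreserving_piFinSuccAbove ν 0).map_eq]
    exact prod_add (hf 0) (by fun_prop) (h 0) (pi_sum (fun j => hf _) (fun j => h _))

end StochLE

/-- Closure under conjunctions: if `X₁,…,Xₙ` are independent (their joint law is the product
measure), similarly `Y₁,…,Yₙ`, and `Xᵢ ⪯_l-st Yᵢ` for each `i`, then the concatenated vectors
satisfy `(X₁,…,Xₙ) ⪯_l-st (Y₁,…,Yₙ)`. -/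
theorem linStOrd_pi {n : ℕ} (p : Fin n → ℕ)
    (μ ν : ∀ i, Measure (Fin (p i) → ℝ))
    [∀ i, IsProbabilityMeasure (μ i)] [∀ i, IsProbabilityMeasure (ν i)]
    (h : ∀ i, LinStOrd (μ i) (ν i)) :
    LinStOrd ((Measure.pi μ).map (fun x (k : Σ i, Fin (p i)) => x k.1 k.2))
      ((Measure.pi ν).map (fun x (k : Σ i, Fin (p i)) => x k.1 k.2)) := by
  intro s hs
  refine (stochLE_map_iff (by fun_prop) (by fun_prop)).2 ?_
  have hsplit : (fun y : (Σ i, Fin (p i)) → ℝ => ∑ k, s k * y k) ∘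
        (fun (x : ∀ i, Fin (p i) → ℝ) (k : Σ i, Fin (p i)) => x k.1 k.2)
      = fun x : ∀ i, Fin (p i) → ℝ => ∑ i, ∑ j, s ⟨i, j⟩ * x i j := by
    ext x
    simp only [Function.comp_apply, ← Finset.univ_sigma_univ, Finset.sum_sigma]
  rw [hsplit]
  exact StochLE.pi_sum (fun i => by fun_prop) fun i => h i _ fun j => hs _
end
end

section
/- Let X = μ + σRU and Y = μ' + σ'RU (in distribution), where R is a nonnegative random variable independent of U, P(U = 1) = P(U = -1) = 1/2, σ, σ' > 0, and the distribution function F₀ of RU is strictly increasing on all of R. Then X ⪯_st Y if and only if μ ≤ μ' and σ = σ'. -/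
open MeasureTheory ProbabilityTheory

/-! Since `σ, σ' > 0`, the events `{μ + σ Z ≤ t}` and `{μ' + σ' Z ≤ t}` (with `Z = RU`) are
`{Z ≤ (t - μ)/σ}` and `{Z ≤ (t - μ')/σ'}`, so as `F₀` is strictly increasing the stochastic
order amounts to `(t - μ')/σ' ≤ (t - μ)/σ` for every `t`. The difference of the two sides is
affine in `t`, and an affine function is nonnegative on all of `ℝ` only when its slope
`1/σ - 1/σ'` vanishes and its constant term is nonnegative. -/

lemma eq_zero_of_forall_mul_le {a b : ℝ} (h : ∀ t : ℝ, t * a ≤ b) : a = 0 := by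
  by_contra ha
  have := h ((b + 1) / a)
  rw [div_mul_cancel₀ _ ha] at this
  linarith

lemma forall_sub_div_le_sub_div_iff {μ μ' σ σ' : ℝ} (hσ : 0 < σ) (hσ' : 0 < σ') :
    (∀ t : ℝ, (t - μ') / σ' ≤ (t - μ) / σ) ↔ μ ≤ μ' ∧ σ = σ' := by
  constructor
  · intro h
    have hlin : ∀ t : ℝ, t * (σ - σ') ≤ σ * μ' - σ' * μ := fun t => by
      have := (div_le_div_iff₀ hσ' hσ).mp (h t)
      linarith
    have hσσ' : σ = σ' := sub_eq_zero.mp (eq_zero_of_forall_mul_le hlin)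
    subst hσσ'
    have := hlin 0
    exact ⟨by nlinarith, rfl⟩
  · rintro ⟨hμ, rfl⟩ t
    gcongr

lemma setOf_add_mul_le_eq {Ω : Type*} (Z : Ω → ℝ) {m s : ℝ} (hs : 0 < s) (t : ℝ) :
    {ω | m + s * Z ω ≤ t} = {ω | Z ω ≤ (t - m) / s} := by
  ext ω
  simp only [Set.mem_ofPred_eq, le_div_iff₀ hs]
  constructor <;> intro h <;> linarith

lemma measure_add_mul_le_le_iff {Ω : Type*} [MeasurableSpace Ω] (P : Measure Ω)
    [IsFiniteMeasure P] (Z : Ω → ℝ) (hF : StrictMono fun t : ℝ => (P {ω | Z ω ≤ t}).toReal)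
    {m m' s s' : ℝ} (hs : 0 < s) (hs' : 0 < s') (t : ℝ) :
    P {ω | m' + s' * Z ω ≤ t} ≤ P {ω | m + s * Z ω ≤ t} ↔ (t - m') / s' ≤ (t - m) / s := by
  rw [setOf_add_mul_le_eq Z hs, setOf_add_mul_le_eq Z hs',
    ← ENNReal.toReal_le_toReal (measure_ne_top _ _) (measure_ne_top _ _)]
  exact hF.le_iff_le

theorem elliptical_stOrd_iff_general
    {Ω : Type*} [MeasurableSpace Ω] (P : Measure Ω) [IsProbabilityMeasure P]
    (R U : Ω → ℝ)
    (μ μ' σ σ' : ℝ) (hσ : 0 < σ) (hσ' : 0 < σ')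
    (hF0 : StrictMono (fun t : ℝ => (P {ω | R ω * U ω ≤ t}).toReal)) :
    (∀ t : ℝ, P {ω | μ' + σ' * (R ω * U ω) ≤ t} ≤ P {ω | μ + σ * (R ω * U ω) ≤ t})
      ↔ (μ ≤ μ' ∧ σ = σ') :=
  (forall_congr' (measure_add_mul_le_le_iff P (fun ω => R ω * U ω) hF0 hσ hσ')).trans
    (forall_sub_div_le_sub_div_iff hσ hσ')

/-- Univariate elliptical location–scale representation: with `X = μ + σRU`, `Y = μ' + σ'RU`
where `R ≥ 0` is independent of `U`, `P(U = 1) = P(U = -1) = 1/2`, and the distribution function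
`F₀` of `RU` is strictly increasing on `ℝ`, one has `X ⪯_st Y ↔ (μ ≤ μ' ∧ σ = σ')`. -/
theorem elliptical_stOrd_iff
    {Ω : Type*} [MeasurableSpace Ω] (P : Measure Ω) [IsProbabilityMeasure P]
    (R U : Ω → ℝ) (hRmeas : Measurable R) (hUmeas : Measurable U)
    (hR : ∀ ω, 0 ≤ R ω) (hindep : IndepFun R U P)
    (hU1 : P {ω | U ω = 1} = 1/2) (hU2 : P {ω | U ω = -1} = 1/2)
    (μ μ' σ σ' : ℝ) (hσ : 0 < σ) (hσ' : 0 < σ')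
    (hF0 : StrictMono (fun t : ℝ => (P {ω | R ω * U ω ≤ t}).toReal)) :
    (∀ t : ℝ, P {ω | μ' + σ' * (R ω * U ω) ≤ t} ≤ P {ω | μ + σ * (R ω * U ω) ≤ t})
      ↔ (μ ≤ μ' ∧ σ = σ') :=
  elliptical_stOrd_iff_general P R U μ μ' σ σ' hσ hσ' hF0
end

section
/- Let X and Y be independent p-dimensional random vectors with X ⪯_st Y (multivariate stochastic order). If in addition P(sᵀX ≤ sᵀY) > 1/2 for some s ∈ S₊^{p-1} and sᵀX, sᵀY are continuous, then X ≺_st Y, i.e., the inequality P(X ∈ U) ≤ P(Y ∈ U) is strict for some upper set U. Equivalently, X ⪯_st Y together with P(sᵀX ≤ sᵀY) > 1/2 rules out X =_st Y. -/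
/-!
Reduce to the real random variables `sᵀX` and `sᵀY`. If `X` and `Y` agreed on every upper set,
then, since `x ↦ sᵀx` is monotone for `s ≥ 0`, `sᵀX` and `sᵀY` would be identically distributed.
For independent, identically distributed, atomless `S, T` the events `S ≤ T` and `T ≤ S` have the
same probability and overlap only on the null set `S = T`, so `P(S ≤ T) = 1/2`, contradicting
`P(sᵀX ≤ sᵀY) > 1/2`.
-/

open MeasureTheory ProbabilityTheory
noncomputable section

/-- `X ⪯_st Y` (multivariate stochastic order): `P(X ∈ U) ≤ P(Y ∈ U)` for all upper sets `U`. -/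
def MvStOrd {ι : Type*} [Fintype ι] (μ ν : Measure (ι → ℝ)) : Prop :=
  ∀ U : Set (ι → ℝ), IsUpperSet U → MeasurableSet U → μ U ≤ ν U

namespace MeasureTheory.Measure

theorem map_eq_map_of_monotone {β : Type*} [Preorder β] [MeasurableSpace β]
    {μ ν : Measure β} [IsFiniteMeasure μ]
    (h : ∀ U, IsUpperSet U → MeasurableSet U → μ U = ν U) {L : β → ℝ} (hL : Monotone L)
    (hLm : Measurable L) : μ.map L = ν.map L := by
  refine ext_of_Ici _ _ fun c => ?_
  rw [map_apply hLm measurableSet_Ici, map_apply hLm measurableSet_Ici]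
  exact h _ (isUpperSet_Ici c |>.preimage hL) (hLm measurableSet_Ici)

theorem prod_diagonal_eq_zero {α : Type*} [MeasurableSpace α] [MeasurableEq α]
    (μ ν : Measure α) [SFinite ν] [NullSingletonClass ν] :
    (μ.prod ν) {q | q.1 = q.2} = 0 := by
  refine (measure_prod_null (measurableSet_eq_fun measurable_fst measurable_snd)).2
    (Filter.Eventually.of_forall fun x => ?_)
  simp [Set.preimage]

variable {α : Type*} [TopologicalSpace α] [LinearOrder α] [OrderClosedTopology α]
  [SecondCountableTopology α] [MeasurableSpace α] [OpensMeasurableSpace α]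

theorem prod_self_setOf_le_eq_half (ν : Measure α) [IsProbabilityMeasure ν]
    [NullSingletonClass ν] : (ν.prod ν) {q | q.1 ≤ q.2} = 1 / 2 := by
  set A : Set (α × α) := {q | q.1 ≤ q.2}
  have hA : MeasurableSet A := measurableSet_le measurable_fst measurable_snd
  have hswap : (ν.prod ν) (Prod.swap ⁻¹' A) = (ν.prod ν) A :=
    measurePreserving_swap.measure_preimage hA.nullMeasurableSet
  have hunion : A ∪ Prod.swap ⁻¹' A = Set.univ := by
    ext q; simp [A, le_total]
  have hinter : A ∩ Prod.swap ⁻¹' A = {q | q.1 = q.2} := by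
    ext q; simp [A, le_antisymm_iff]
  have hsum := measure_union_add_inter (μ := ν.prod ν) A (hA.preimage measurable_swap)
  rw [hunion, hinter, prod_diagonal_eq_zero, hswap, measure_univ, add_zero] at hsum
  rw [ENNReal.eq_div_iff two_ne_zero ENNReal.ofNat_ne_top, two_mul, hsum]

end MeasureTheory.Measure

namespace ProbabilityTheory

variable {Ω α : Type*} [MeasurableSpace Ω] {P : Measure Ω} [IsProbabilityMeasure P]
  [TopologicalSpace α] [LinearOrder α] [OrderClosedTopology α]
  [SecondCountableTopology α] [MeasurableSpace α] [OpensMeasurableSpace α]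

theorem IndepFun.measure_le_eq_half {f g : Ω → α} (hindep : IndepFun f g P)
    (hfg : IdentDistrib f g P P) (hg : ∀ c, P {ω | g ω = c} = 0) :
    P {ω | f ω ≤ g ω} = 1 / 2 := by
  have hg_ae := hfg.aemeasurable_snd
  have := Measure.isProbabilityMeasure_map (μ := P) hg_ae
  have : NullSingletonClass (P.map g) :=
    ⟨fun c => (Measure.map_apply_of_aemeasurable hg_ae (measurableSet_singleton c)).trans (hg c)⟩
  have hjoint : P.map (fun ω => (f ω, g ω)) = (P.map g).prod (P.map g) := by
    rw [(indepFun_iff_map_prod_eq_prod_map_map hfg.aemeasurable_fst hg_ae).1 hindep, hfg.map_eq]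
  rw [← Measure.prod_self_setOf_le_eq_half (P.map g), ← hjoint,
    Measure.map_apply_of_aemeasurable (hfg.aemeasurable_fst.prodMk hg_ae)
      (measurableSet_le measurable_fst measurable_snd)]
  rfl

end ProbabilityTheory

theorem strict_mvStOrd_of_prob_gt_half_general {p : ℕ}
    {Ω : Type*} [MeasurableSpace Ω] (P : Measure Ω) [IsProbabilityMeasure P]
    (X Y : Ω → Fin p → ℝ) (hX : Measurable X) (hY : Measurable Y)
    (hindep : IndepFun X Y P)
    (hst : MvStOrd (P.map X) (P.map Y))
    (s : Fin p → ℝ) (hs0 : ∀ i, 0 ≤ s i)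
    (hcontY : ∀ c : ℝ, P {ω | ∑ i, s i * Y ω i = c} = 0)
    (hgt : 1 / 2 < P {ω | ∑ i, s i * X ω i ≤ ∑ i, s i * Y ω i}) :
    ∃ U : Set (Fin p → ℝ), IsUpperSet U ∧ MeasurableSet U ∧ P.map X U < P.map Y U := by
  by_contra! hle
  set L : (Fin p → ℝ) → ℝ := fun x => ∑ i, s i * x i
  have hLm : Measurable L := by fun_prop
  have hLmono : Monotone L := fun x y hxy =>
    Finset.sum_le_sum fun i _ => mul_le_mul_of_nonneg_left (hxy i) (hs0 i)
  have hident : IdentDistrib (L ∘ X) (L ∘ Y) P P :=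
    ⟨(hLm.comp hX).aemeasurable, (hLm.comp hY).aemeasurable, by
      rw [← Measure.map_map hLm hX, ← Measure.map_map hLm hY]
      exact Measure.map_eq_map_of_monotone
        (fun U hU hUm => (hst U hU hUm).antisymm (hle U hU hUm)) hLmono hLm⟩
  exact hgt.ne ((hindep.comp hLm hLm).measure_le_eq_half hident hcontY).symm

/-- If `X ⪯_st Y` with `X, Y` independent and, for some `s` in the positive part of the unit
sphere with `sᵀX`, `sᵀY` continuous, `P(sᵀX ≤ sᵀY) > 1/2`, then `X ≺_st Y`: the inequality
`P(X ∈ U) ≤ P(Y ∈ U)` is strict for some upper set `U` (in particular `X =_st Y` is ruled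
out). -/
theorem strict_mvStOrd_of_prob_gt_half {p : ℕ}
    {Ω : Type*} [MeasurableSpace Ω] (P : Measure Ω) [IsProbabilityMeasure P]
    (X Y : Ω → Fin p → ℝ) (hX : Measurable X) (hY : Measurable Y)
    (hindep : IndepFun X Y P)
    (hst : MvStOrd (P.map X) (P.map Y))
    (s : Fin p → ℝ) (hs0 : ∀ i, 0 ≤ s i) (hs1 : Real.sqrt (∑ i, s i ^ 2) = 1)
    (hcontX : ∀ c : ℝ, P {ω | ∑ i, s i * X ω i = c} = 0)
    (hcontY : ∀ c : ℝ, P {ω | ∑ i, s i * Y ω i = c} = 0)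
    (hgt : 1 / 2 < P {ω | ∑ i, s i * X ω i ≤ ∑ i, s i * Y ω i}) :
    ∃ U : Set (Fin p → ℝ), IsUpperSet U ∧ MeasurableSet U ∧ P.map X U < P.map Y U :=
  strict_mvStOrd_of_prob_gt_half_general P X Y hX hY hindep hst s hs0 hcontY hgt
end
end

section
/- Let Z_{11},...,Z_{nm} be the kernel values Z_{ij} of a two-sample U-statistic, where Z_{ij} = h(X_i, Y_j) with X_1,...,X_n i.i.d., Y_1,...,Y_m i.i.d. and independent of the X's, the kernel h bounded with |h| ≤ b, and μ = E[h(X_1,Y_1)] > 0. Then P((nm)⁻¹ Σᵢ Σⱼ Z_{ij} ≤ 0) ≤ exp(-N·min(n/N, m/N)·μ²/(2b²)) where N = n + m. -/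
/-!
Put `k = min n m`. For a shift `p ∈ Fin n × Fin m`, the `k` diagonal terms
`h (X (p.1 + r)) (Y (p.2 + r))`, `r < k`, involve pairwise distinct `X`'s and pairwise distinct
`Y`'s, hence are independent, and by Hoeffding's lemma the average of `μ - h (X _) (Y _)` over them
is sub-Gaussian with variance proxy `b² / k`. Over all shifts every pair `(i, j)` occurs exactly
`k` times, so `μ - U` is the uniform average of these diagonal averages; by convexity of `exp`
it is again sub-Gaussian with proxy `b² / k`, and the Chernoff bound gives
`P (U ≤ 0) = P (μ ≤ μ - U) ≤ exp (-k μ² / (2 b²))`. Finally `N · min (n / N) (m / N) = k`.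
-/

open MeasureTheory ProbabilityTheory Measure
open scoped NNReal

lemma Fintype.sum_sum_add_eq_card_smul {G κ M : Type*} [AddGroup G] [Fintype G] [Fintype κ]
    [AddCommMonoid M] (f : G → M) (a : κ → G) :
    ∑ g, ∑ r, f (g + a r) = Fintype.card κ • ∑ g, f g := by
  rw [Finset.sum_comm, ← Finset.card_univ, ← Finset.sum_const]
  exact Finset.sum_congr rfl fun r _ ↦ Equiv.sum_comp (Equiv.addRight (a r)) f

namespace ProbabilityTheory

section SubGaussian

variable {Ω ι : Type*} {mΩ : MeasurableSpace Ω} {P : Measure Ω}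

lemma hasSubgaussianMGF_integral_sub_of_abs_le [IsProbabilityMeasure P] {Z : Ω → ℝ} {b : ℝ}
    (hZ : AEMeasurable Z P) (hb : ∀ ω, |Z ω| ≤ b) :
    HasSubgaussianMGF (fun ω ↦ P[Z] - Z ω) (‖b‖₊ ^ 2) P := by
  have h := (hasSubgaussianMGF_of_mem_Icc hZ (ae_of_all _ fun ω ↦ abs_le.mp (hb ω))).neg
  have hc : ‖b - -b‖₊ / 2 = ‖b‖₊ := by
    rw [sub_neg_eq_add, ← two_mul, nnnorm_mul, Real.nnnorm_two, mul_div_cancel_left₀ _ two_ne_zero]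
  rw [hc] at h
  convert h using 1
  ext ω
  simp

lemma HasSubgaussianMGF.mean_of_iIndepFun [Fintype ι] {Z : ι → Ω → ℝ} {c : ℝ≥0}
    (h_indep : iIndepFun Z P) (h : ∀ i, HasSubgaussianMGF (Z i) c P) :
    HasSubgaussianMGF (fun ω ↦ (Fintype.card ι : ℝ)⁻¹ * ∑ i, Z i ω) (c / Fintype.card ι) P := by
  convert (HasSubgaussianMGF.sum_of_iIndepFun h_indep fun i _ ↦ h i).const_mul
    (Fintype.card ι : ℝ)⁻¹ using 1
  ext
  change ((c / Fintype.card ι : ℝ≥0) : ℝ) = (Fintype.card ι : ℝ)⁻¹ ^ 2 * ((∑ _i : ι, c : ℝ≥0) : ℝ)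
  rw [NNReal.coe_div, NNReal.coe_sum]
  simp only [Finset.sum_const, Finset.card_univ, nsmul_eq_mul, NNReal.coe_natCast]
  rcases (Fintype.card ι).eq_zero_or_pos with h0 | hpos
  · simp [h0]
  · field_simp

lemma HasSubgaussianMGF.sum_mul_of_sum_eq_one {Z : ι → Ω → ℝ} {c : ℝ≥0} {s : Finset ι}
    {w : ι → ℝ} (hw₀ : ∀ i ∈ s, 0 ≤ w i) (hw₁ : ∑ i ∈ s, w i = 1)
    (h : ∀ i ∈ s, HasSubgaussianMGF (Z i) c P) :
    HasSubgaussianMGF (fun ω ↦ ∑ i ∈ s, w i * Z i ω) c P := by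
  have hjensen (t : ℝ) (ω : Ω) :
      Real.exp (t * ∑ i ∈ s, w i * Z i ω) ≤ ∑ i ∈ s, w i * Real.exp (t * Z i ω) := by
    have := convexOn_exp.map_sum_le hw₀ hw₁ (p := fun i ↦ t * Z i ω) fun _ _ ↦ Set.mem_univ _
    simpa [Finset.mul_sum, mul_left_comm t] using this
  have hint (t : ℝ) : Integrable (fun ω ↦ ∑ i ∈ s, w i * Real.exp (t * Z i ω)) P :=
    integrable_finsetSum _ fun i hi ↦ ((h i hi).integrable_exp_mul t).const_mul _
  have hmeas : AEStronglyMeasurable (fun ω ↦ ∑ i ∈ s, w i * Z i ω) P :=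
    Finset.aestronglyMeasurable_fun_sum _ fun i hi ↦ (h i hi).aestronglyMeasurable.const_mul _
  have hint_exp (t : ℝ) : Integrable (fun ω ↦ Real.exp (t * ∑ i ∈ s, w i * Z i ω)) P :=
    (hint t).mono' (Real.continuous_exp.comp_aestronglyMeasurable (hmeas.const_mul t))
      (ae_of_all _ fun ω ↦ by rw [Real.norm_of_nonneg (Real.exp_pos _).le]; exact hjensen t ω)
  refine ⟨hint_exp, fun t ↦ ?_⟩
  calc mgf (fun ω ↦ ∑ i ∈ s, w i * Z i ω) P t
      ≤ ∫ ω, ∑ i ∈ s, w i * Real.exp (t * Z i ω) ∂P :=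
        integral_mono (hint_exp t) (hint t) (hjensen t)
    _ = ∑ i ∈ s, w i * mgf (Z i) P t := by
        rw [integral_finsetSum _ fun i hi ↦ ((h i hi).integrable_exp_mul t).const_mul _]
        simp_rw [integral_const_mul, mgf]
    _ ≤ ∑ i ∈ s, w i * Real.exp (c * t ^ 2 / 2) :=
        Finset.sum_le_sum fun i hi ↦ mul_le_mul_of_nonneg_left ((h i hi).mgf_le t) (hw₀ i hi)
    _ = Real.exp (c * t ^ 2 / 2) := by rw [← Finset.sum_mul, hw₁, one_mul]

end SubGaussian

section Independence

variable {Ω ι ι' κ E E' : Type*} {mΩ : MeasurableSpace Ω} {P : Measure Ω}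
  [MeasurableSpace E] [MeasurableSpace E'] {X : ι → Ω → E} {Y : ι' → Ω → E'}

lemma iIndepFun.curry {κ : ι → Type*} {𝓧 : (i : ι) → κ i → Type*}
    {m𝓧 : ∀ i j, MeasurableSpace (𝓧 i j)} {X : (i : ι) → (j : κ i) → Ω → 𝓧 i j}
    (mX : ∀ i j, Measurable (X i j)) (h : iIndepFun (fun (p : (i : ι) × κ i) ω ↦ X p.1 p.2 ω) P) :
    iIndepFun (fun i ω ↦ (X i · ω)) P := by
  have := h.isProbabilityMeasure
  have : ∀ i j, IsProbabilityMeasure (P.map (X i j)) :=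
    fun i j ↦ isProbabilityMeasure_map (mX i j).aemeasurable
  have hblock (i : ι) : P.map (fun ω ↦ (X i · ω)) = infinitePi fun j ↦ P.map (X i j) :=
    (h.precomp sigma_mk_injective).map_fun_eq_infinitePi_map (fun j ↦ mX i j)
  have hcurry : (fun ω i j ↦ X i j ω) = MeasurableEquiv.piCurry 𝓧 ∘ fun ω p ↦ X p.1 p.2 ω := by
    ext; simp [Sigma.curry]
  rw [iIndepFun_iff_map_fun_eq_infinitePi_map (by fun_prop), hcurry,
    ← map_map (by fun_prop) (by fun_prop), h.map_fun_eq_infinitePi_map fun p ↦ mX p.1 p.2,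
    infinitePi_map_piCurry fun i j ↦ P.map (X i j)]
  simp_rw [hblock]

lemma indepFun_of_iIndepFun_sumElim
    (hindep : iIndepFun (Sum.elim (fun i ω ↦ (Sum.inl (X i ω) : E ⊕ E'))
      (fun j ω ↦ (Sum.inr (Y j ω) : E ⊕ E'))) P) (i : ι) (j : ι') :
    IndepFun (X i) (Y j) P := by
  have := hindep.isProbabilityMeasure
  obtain ⟨ω₀⟩ := nonempty_of_isProbabilityMeasure P
  exact (hindep.indepFun Sum.inl_ne_inr).comp (φ := Sum.elim id fun _ ↦ X i ω₀)
    (ψ := Sum.elim (fun _ ↦ Y j ω₀) id) (measurable_id.sumElim measurable_const)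
    (measurable_const.sumElim measurable_id)

lemma identDistrib_prodMk_of_iIndepFun_sumElim (hX : ∀ i, Measurable (X i))
    (hY : ∀ j, Measurable (Y j))
    (hindep : iIndepFun (Sum.elim (fun i ω ↦ (Sum.inl (X i ω) : E ⊕ E'))
      (fun j ω ↦ (Sum.inr (Y j ω) : E ⊕ E'))) P)
    {i i' : ι} {j j' : ι'} (hXi : P.map (X i) = P.map (X i')) (hYj : P.map (Y j) = P.map (Y j')) :
    IdentDistrib (fun ω ↦ (X i ω, Y j ω)) (fun ω ↦ (X i' ω, Y j' ω)) P P where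
  aemeasurable_fst := ((hX i).prodMk (hY j)).aemeasurable
  aemeasurable_snd := ((hX i').prodMk (hY j')).aemeasurable
  map_eq := by
    have := hindep.isProbabilityMeasure
    rw [(indepFun_iff_map_prod_eq_prod_map_map (hX i).aemeasurable (hY j).aemeasurable).mp
        (indepFun_of_iIndepFun_sumElim hindep i j),
      (indepFun_iff_map_prod_eq_prod_map_map (hX i').aemeasurable (hY j').aemeasurable).mp
        (indepFun_of_iIndepFun_sumElim hindep i' j'), hXi, hYj]

lemma iIndepFun_prodMk_of_iIndepFun_sumElim (hX : ∀ i, Measurable (X i))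
    (hY : ∀ j, Measurable (Y j))
    (hindep : iIndepFun (Sum.elim (fun i ω ↦ (Sum.inl (X i ω) : E ⊕ E'))
      (fun j ω ↦ (Sum.inr (Y j ω) : E ⊕ E'))) P)
    {a : κ → ι} {c : κ → ι'} (ha : a.Injective) (hc : c.Injective) :
    iIndepFun (fun r ω ↦ (X (a r) ω, Y (c r) ω)) P := by
  have := hindep.isProbabilityMeasure
  obtain ⟨ω₀⟩ := nonempty_of_isProbabilityMeasure P
  let idx : (_ : κ) × Bool → ι ⊕ ι' := fun p ↦ bif p.2 then .inl (a p.1) else .inr (c p.1)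
  have hidx : idx.Injective := by
    rintro ⟨r, _ | _⟩ ⟨s, _ | _⟩ hrs <;> simp_all [idx, ha.eq_iff, hc.eq_iff]
  have hF : ∀ i, Measurable (Sum.elim (fun i ω ↦ (Sum.inl (X i ω) : E ⊕ E'))
      (fun j ω ↦ (Sum.inr (Y j ω) : E ⊕ E')) i) := by
    rintro (i | j)
    exacts [measurable_inl.comp (hX i), measurable_inr.comp (hY j)]
  have hblocks : iIndepFun (fun r ω (b : Bool) ↦ Sum.elim (fun i ω ↦ (Sum.inl (X i ω) : E ⊕ E'))
      (fun j ω ↦ (Sum.inr (Y j ω) : E ⊕ E')) (idx ⟨r, b⟩) ω) P :=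
    (hindep.precomp hidx).curry fun _ _ ↦ hF _
  refine hblocks.comp (fun r v ↦ (Sum.elim id (fun _ ↦ X (a r) ω₀) (v true),
    Sum.elim (fun _ ↦ Y (c r) ω₀) id (v false))) fun r ↦ ?_
  exact ((measurable_id.sumElim measurable_const).comp (measurable_pi_apply _)).prodMk
    ((measurable_const.sumElim measurable_id).comp (measurable_pi_apply _))

end Independence

section TwoSample

variable {Ω E E' : Type*} {mΩ : MeasurableSpace Ω} [MeasurableSpace E] [MeasurableSpace E']
  {P : Measure Ω}

lemma hasSubgaussianMGF_mean_sub_of_injective {ι ι' κ : Type*} [Fintype κ]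
    {X : ι → Ω → E} {Y : ι' → Ω → E'} (hX : ∀ i, Measurable (X i)) (hY : ∀ j, Measurable (Y j))
    (hindep : iIndepFun (Sum.elim (fun i ω ↦ (Sum.inl (X i ω) : E ⊕ E'))
      (fun j ω ↦ (Sum.inr (Y j ω) : E ⊕ E'))) P)
    {h : E → E' → ℝ} (hmeas : Measurable (Function.uncurry h)) {b μ : ℝ}
    (hb : ∀ x y, |h x y| ≤ b) (hmean : ∀ i j, ∫ ω, h (X i ω) (Y j ω) ∂P = μ)
    {a : κ → ι} {c : κ → ι'} (ha : a.Injective) (hc : c.Injective) :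
    HasSubgaussianMGF (fun ω ↦ (Fintype.card κ : ℝ)⁻¹ * ∑ r, (μ - h (X (a r) ω) (Y (c r) ω)))
      (‖b‖₊ ^ 2 / Fintype.card κ) P := by
  have := hindep.isProbabilityMeasure
  refine HasSubgaussianMGF.mean_of_iIndepFun ?_ fun r ↦ ?_
  · exact (iIndepFun_prodMk_of_iIndepFun_sumElim hX hY hindep ha hc).comp _ fun _ ↦
      measurable_const.sub hmeas
  · rw [← hmean (a r) (c r)]
    exact hasSubgaussianMGF_integral_sub_of_abs_le
      (hmeas.comp ((hX _).prodMk (hY _))).aemeasurable fun ω ↦ hb _ _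

lemma measureReal_uStat_nonpos_le {n m : ℕ} [NeZero n] [NeZero m]
    {X : Fin n → Ω → E} {Y : Fin m → Ω → E'} (hX : ∀ i, Measurable (X i))
    (hY : ∀ j, Measurable (Y j))
    (hindep : iIndepFun (Sum.elim (fun i ω ↦ (Sum.inl (X i ω) : E ⊕ E'))
      (fun j ω ↦ (Sum.inr (Y j ω) : E ⊕ E'))) P)
    {h : E → E' → ℝ} (hmeas : Measurable (Function.uncurry h)) {b μ : ℝ}
    (hb : ∀ x y, |h x y| ≤ b) (hmean : ∀ i j, ∫ ω, h (X i ω) (Y j ω) ∂P = μ) (hμ : 0 ≤ μ) :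
    P.real {ω | (∑ i, ∑ j, h (X i ω) (Y j ω)) / ((n : ℝ) * m) ≤ 0}
      ≤ Real.exp (-(min n m * μ ^ 2 / (2 * b ^ 2))) := by
  set k := min n m
  have hn : (n : ℝ) ≠ 0 := Nat.cast_ne_zero.mpr (NeZero.ne n)
  have hm : (m : ℝ) ≠ 0 := Nat.cast_ne_zero.mpr (NeZero.ne m)
  have hk : (k : ℝ) ≠ 0 := Nat.cast_ne_zero.mpr (lt_min (NeZero.pos n) (NeZero.pos m)).ne'
  let Z : Fin n × Fin m → Ω → ℝ := fun p ω ↦ μ - h (X p.1 ω) (Y p.2 ω)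
  let diag : Fin k → Fin n × Fin m := fun r ↦
    (Fin.castLE (min_le_left n m) r, Fin.castLE (min_le_right n m) r)
  have hshift (p : Fin n × Fin m) :
      HasSubgaussianMGF (fun ω ↦ (k : ℝ)⁻¹ * ∑ r, Z (p + diag r) ω) (‖b‖₊ ^ 2 / k) P := by
    have := hasSubgaussianMGF_mean_sub_of_injective hX hY hindep hmeas hb hmean
      ((add_right_injective p.1).comp (Fin.castLE_injective (min_le_left n m)))
      ((add_right_injective p.2).comp (Fin.castLE_injective (min_le_right n m)))
    rwa [Fintype.card_fin] at this
  have hU := HasSubgaussianMGF.sum_mul_of_sum_eq_one (s := Finset.univ)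
    (w := fun _ ↦ ((n : ℝ) * m)⁻¹) (fun _ _ ↦ by positivity) (by simp; field_simp)
    fun p _ ↦ hshift p
  have hW (ω : Ω) : ∑ p, ((n : ℝ) * m)⁻¹ * ((k : ℝ)⁻¹ * ∑ r, Z (p + diag r) ω)
      = μ - (∑ i, ∑ j, h (X i ω) (Y j ω)) / ((n : ℝ) * m) := by
    rw [← Finset.mul_sum, ← Finset.mul_sum, Fintype.sum_sum_add_eq_card_smul (Z · ω) diag]
    simp [Z, Finset.sum_sub_distrib, Fintype.sum_prod_type]
    field_simp
  have hevent : {ω | (∑ i, ∑ j, h (X i ω) (Y j ω)) / ((n : ℝ) * m) ≤ 0}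
      = {ω | μ ≤ ∑ p, ((n : ℝ) * m)⁻¹ * ((k : ℝ)⁻¹ * ∑ r, Z (p + diag r) ω)} := by
    ext ω
    simp only [Set.mem_ofPred_eq, hW, le_sub_self_iff]
  rw [hevent]
  refine (hU.measure_ge_le hμ).trans_eq ?_
  push_cast
  rw [Real.norm_eq_abs, sq_abs, mul_div_assoc', div_div_eq_mul_div]
  ring_nf

end TwoSample

end ProbabilityTheory

/-- Hoeffding's exponential inequality for a two-sample U-statistic with bounded kernel:
with `X₁,…,Xₙ` i.i.d., `Y₁,…,Yₘ` i.i.d., the whole family independent, `|h| ≤ b` and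
`μ = E[h(X₁,Y₁)] > 0`, one has
`P((nm)⁻¹ ∑ᵢ∑ⱼ h(Xᵢ,Yⱼ) ≤ 0) ≤ exp(-N min(n/N, m/N) μ² / (2b²))` where `N = n + m`. -/
theorem two_sample_U_hoeffding {E E' : Type*} [MeasurableSpace E] [MeasurableSpace E']
    {Ω : Type*} [MeasurableSpace Ω] (P : Measure Ω) [IsProbabilityMeasure P]
    (n m : ℕ) (hn : 0 < n) (hm : 0 < m)
    (X : Fin n → Ω → E) (Y : Fin m → Ω → E')
    (hXmeas : ∀ i, Measurable (X i)) (hYmeas : ∀ j, Measurable (Y j))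
    (hindep : iIndepFun
      (Sum.elim (fun i ω => (Sum.inl (X i ω) : E ⊕ E'))
        (fun j ω => (Sum.inr (Y j ω) : E ⊕ E'))) P)
    (hXid : ∀ i : Fin n, P.map (X i) = P.map (X ⟨0, hn⟩))
    (hYid : ∀ j : Fin m, P.map (Y j) = P.map (Y ⟨0, hm⟩))
    (h : E → E' → ℝ) (hmeas : Measurable (Function.uncurry h))
    (b : ℝ) (hb : ∀ x y, |h x y| ≤ b)
    (μval : ℝ) (hμval : μval = ∫ ω, h (X ⟨0, hn⟩ ω) (Y ⟨0, hm⟩ ω) ∂P) (hpos : 0 < μval) :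
    P {ω | (∑ i, ∑ j, h (X i ω) (Y j ω)) / ((n : ℝ) * m) ≤ 0}
      ≤ ENNReal.ofReal
          (Real.exp (-(((n + m : ℝ)) *
            min ((n : ℝ) / (n + m)) ((m : ℝ) / (n + m)) * μval ^ 2 / (2 * b ^ 2)))) := by
  
  have : NeZero n := ⟨hn.ne'⟩
  have : NeZero m := ⟨hm.ne'⟩
  have hmean (i : Fin n) (j : Fin m) : ∫ ω, h (X i ω) (Y j ω) ∂P = μval := by
    rw [hμval]
    exact ((identDistrib_prodMk_of_iIndepFun_sumElim hXmeas hYmeas hindep (hXid i)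
      (hYid j)).comp hmeas).integral_eq
  have hN : (0 : ℝ) < n + m := by positivity
  have hk : (n + m : ℝ) * min ((n : ℝ) / (n + m)) ((m : ℝ) / (n + m)) = (min n m : ℕ) := by
    rw [min_div_div_right hN.le, mul_div_cancel₀ _ hN.ne', Nat.cast_min]
  rw [hk, ← ofReal_measureReal]
  exact ENNReal.ofReal_le_ofReal
    (measureReal_uStat_nonpos_le hXmeas hYmeas hindep hmeas hb hmean hpos.le)
end
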